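/- Let C be a finite set of colors, G a finite graph, and K a fixed complete graph on at least 2 vertices that does not occur as a subgraph of G. Form G* as the disjoint union of G with |C|−1 disjoint copies of K. Then colorings c : V(G) → C are in bijection with linear orderings of V(G*) (up to the stated equivalence) in which each copy of K is an interval, the copies appear in a fixed order, and vertices of color i lie between the (i−1)-st and i-th copies; under this bijection, for any colored graph F′ on underlying graph F, the coloring c contains a copy of F′ if and only if the corresponding ordering of G* contains the corresponding ordered copy of F plus the |C|−1 copies of K with the induced ordering. -/

import Mathlib

/-- The disjoint union of `G` with `c - 1` disjoint copies of the complete graph `K_k`. -/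
def starGraph {V : Type} (G : SimpleGraph V) (c k : ℕ) :
    SimpleGraph (V ⊕ Fin (c - 1) × Fin k) :=
  SimpleGraph.fromRel (fun a b =>
    match a, b with
    | Sum.inl u, Sum.inl v => G.Adj u v
    | Sum.inr p, Sum.inr q => p.1 = q.1 ∧ p.2 ≠ q.2
    | _, _ => False)

/-- An ordering of `G*` is good: injective, each copy of `K` is an interval, and the
copies appear in increasing order. -/
def GoodOrd {V : Type} (c k : ℕ) (ord : V ⊕ Fin (c - 1) × Fin k → ℚ) : Prop :=
  Function.Injective ord ∧
  (∀ i : Fin (c - 1), ∀ y : V ⊕ Fin (c - 1) × Fin k,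
    (∃ p q : Fin k, ord (Sum.inr (i, p)) < ord y ∧ ord y < ord (Sum.inr (i, q))) →
    ∃ p : Fin k, y = Sum.inr (i, p)) ∧
  (∀ i j : Fin (c - 1), i < j → ∀ p q : Fin k,
    ord (Sum.inr (i, p)) < ord (Sum.inr (j, q)))

/-- The coloring of `V` induced by an ordering of `G*`: the color of `v` is the number
of copies of `K` lying entirely below `v`. -/
def inducedCol {V : Type} (c k : ℕ) (ord : V ⊕ Fin (c - 1) × Fin k → ℚ) (v : V) : ℕ :=
  (Finset.univ.filter fun i : Fin (c - 1) =>
    ∀ p : Fin k, ord (Sum.inr (i, p)) < ord (Sum.inl v)).card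

/-- The strict order pattern of the ordered graph `F₊` associated to a coloring
`fcol` of `F`: copies of `K` in increasing order, the vertices of color `i` between the
`(i-1)`-st and `i`-th copies (vertices of equal color incomparable). -/
def patternLT {fn : ℕ} (c k : ℕ) (fcol : Fin fn → ℕ) :
    Fin fn ⊕ Fin (c - 1) × Fin k → Fin fn ⊕ Fin (c - 1) × Fin k → Prop
  | Sum.inl u, Sum.inl v => fcol u < fcol v
  | Sum.inl u, Sum.inr p => fcol u ≤ (p.1 : ℕ)
  | Sum.inr p, Sum.inl u => (p.1 : ℕ) < fcol u
  | Sum.inr p, Sum.inr q => p.1 < q.1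

/-!
A coloring is encoded by placing the vertices of color `i` between the `(i-1)`-st and the
`i`-th copy of `K`, and conversely the color of a vertex is read off as the number of copies
below it. A colored copy of `F'` then extends by the identity on the copies to an ordered copy
of `F₊`. Conversely, as `G` contains no `K_k`, every clique of `G*` of size `k` is a copy of `K`,
so an ordered copy of `F₊` maps copies of `K` bijectively onto copies; the order pattern forces
this permutation of the copies to be monotone, hence the identity, and what remains is a
colored copy of `F'`.
-/

open Finset

section StarGraph

variable {V W : Type} {G : SimpleGraph V} {c k : ℕ}

@[simp]
lemma starGraph_adj_inl_inl {u v : V} :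
    (starGraph G c k).Adj (.inl u) (.inl v) ↔ G.Adj u v := by
  simp only [starGraph, SimpleGraph.fromRel_adj, ne_eq, Sum.inl.injEq]
  exact ⟨fun h => h.2.elim id G.adj_symm, fun h => ⟨h.ne, .inl h⟩⟩

@[simp]
lemma starGraph_adj_inr_inr {p q : Fin (c - 1) × Fin k} :
    (starGraph G c k).Adj (.inr p) (.inr q) ↔ p.1 = q.1 ∧ p.2 ≠ q.2 := by
  simp only [starGraph, SimpleGraph.fromRel_adj, ne_eq, Sum.inr.injEq]
  constructor
  · rintro ⟨-, h | h⟩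
    exacts [h, ⟨h.1.symm, Ne.symm h.2⟩]
  · rintro ⟨h₁, h₂⟩
    exact ⟨fun h => h₂ (congrArg Prod.snd h), .inl ⟨h₁, h₂⟩⟩

@[simp]
lemma starGraph_not_adj_inl_inr {u : V} {q : Fin (c - 1) × Fin k} :
    ¬ (starGraph G c k).Adj (.inl u) (.inr q) := by
  simp [starGraph]

@[simp]
lemma starGraph_not_adj_inr_inl {p : Fin (c - 1) × Fin k} {v : V} :
    ¬ (starGraph G c k).Adj (.inr p) (.inl v) := by
  simp [starGraph]

lemma starGraph_adj_sumMap {F : SimpleGraph W} {φ : W → V}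
    (hφ : ∀ a b, F.Adj a b → G.Adj (φ a) (φ b)) (x y : W ⊕ Fin (c - 1) × Fin k)
    (hxy : (starGraph F c k).Adj x y) :
    (starGraph G c k).Adj (Sum.map φ id x) (Sum.map φ id y) := by
  rcases x with a | p <;> rcases y with b | q <;> simp_all

lemma exists_copy_of_starGraph_clique {m : ℕ} (hG : G.CliqueFree m)
    (f : Fin m → V ⊕ Fin (c - 1) × Fin k)
    (hf : ∀ p q, p ≠ q → (starGraph G c k).Adj (f p) (f q)) :
    ∃ j, ∀ p, ∃ q, f p = .inr (j, q) := by
  by_cases hcopy : ∃ p₀ j q₀, f p₀ = .inr (j, q₀)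
  · obtain ⟨p₀, j, q₀, hp₀⟩ := hcopy
    refine ⟨j, fun p => ?_⟩
    by_cases hp : p = p₀
    · exact ⟨q₀, hp ▸ hp₀⟩
    · have hadj := hf p p₀ hp
      rw [hp₀] at hadj
      rcases hfp : f p with u | ⟨j', q⟩
      · simp [hfp] at hadj
      · simp only [hfp, starGraph_adj_inr_inr] at hadj
        exact ⟨q, by rw [hadj.1]⟩
  · push Not at hcopy
    have hinl : ∀ p, ∃ u, f p = .inl u := fun p => by
      rcases hfp : f p with u | ⟨j, q⟩
      exacts [⟨u, rfl⟩, absurd hfp (hcopy p j q)]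
    choose ψ hψ using hinl
    have hψadj : ∀ p q, p ≠ q → G.Adj (ψ p) (ψ q) := fun p q hpq => by
      simpa [hψ] using hf p q hpq
    refine (SimpleGraph.cliqueFree_iff.mp hG).elim ⟨⟨ψ, fun {p q} hpq => hψadj p q hpq⟩, ?_⟩
    intro p q h
    by_contra hpq
    exact (hψadj p q hpq).ne h

end StarGraph

lemma mem_iff_lt_card_of_isLowerSet {N : ℕ} {S : Finset (Fin N)}
    (hS : IsLowerSet (S : Set (Fin N))) (i : Fin N) : i ∈ S ↔ (i : ℕ) < #S := by
  constructor
  · intro hi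
    have := card_le_card fun j (hj : j ∈ Iic i) => hS (mem_Iic.mp hj) hi
    rw [Fin.card_Iic] at this
    omega
  · intro hi
    by_contra hiS
    have := card_le_card fun j (hj : j ∈ S) =>
      mem_Iio.mpr (lt_of_not_ge fun hij => hiS (hS hij hj))
    rw [Fin.card_Iio] at this
    omega

section InducedCol

variable {V : Type} {c k : ℕ} {ord : V ⊕ Fin (c - 1) × Fin k → ℚ}

lemma inducedCol_le (v : V) : inducedCol c k ord v ≤ c - 1 :=
  (card_filter_le _ _).trans_eq (card_fin _)

lemma inducedCol_congr {ord' : V ⊕ Fin (c - 1) × Fin k → ℚ}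
    (h : ∀ x y, ord x < ord y ↔ ord' x < ord' y) :
    inducedCol c k ord = inducedCol c k ord' := by
  ext v
  simp only [inducedCol, h]

lemma inducedCol_eq_of_forall_iff {v : V} {m : ℕ} (hm : m ≤ c - 1)
    (h : ∀ i : Fin (c - 1), (∀ p, ord (.inr (i, p)) < ord (.inl v)) ↔ (i : ℕ) < m) :
    inducedCol c k ord v = m := by
  simp only [inducedCol, h, Fin.card_filter_val_lt, min_eq_right hm]

end InducedCol

namespace GoodOrd

variable {V : Type} {c k : ℕ} {ord : V ⊕ Fin (c - 1) × Fin k → ℚ}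

lemma lt_of_forall_copy_lt (hord : GoodOrd c k ord) (hk : 0 < k) {i j : Fin (c - 1)}
    (h : ∀ p q, ord (.inr (i, p)) < ord (.inr (j, q))) : i < j := by
  by_contra! hji
  obtain rfl | hji := hji.eq_or_lt
  · exact lt_irrefl _ (h ⟨0, hk⟩ ⟨0, hk⟩)
  · exact lt_asymm (h ⟨0, hk⟩ ⟨0, hk⟩) (hord.2.2 j i hji _ _)

lemma forall_copy_lt_iff (hord : GoodOrd c k ord) (hk : 0 < k) (v : V) (i : Fin (c - 1)) :
    (∀ p, ord (.inr (i, p)) < ord (.inl v)) ↔ (i : ℕ) < inducedCol c k ord v := by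
  have hlower : IsLowerSet ({i | ∀ p, ord (.inr (i, p)) < ord (.inl v)} : Set (Fin (c - 1))) :=
    fun i j hji hi p => hji.eq_or_lt.elim (fun h => h ▸ hi p)
      fun h => (hord.2.2 j i h p ⟨0, hk⟩).trans (hi ⟨0, hk⟩)
  simpa [inducedCol] using mem_iff_lt_card_of_isLowerSet
    (S := {i | ∀ p, ord (.inr (i, p)) < ord (.inl v)}) (by simpa using hlower) i

/-- Copies are intervals, so a vertex not above the whole copy is below all of it. -/
lemma lt_copy_of_inducedCol_le (hord : GoodOrd c k ord) (hk : 0 < k) {v : V}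
    {i : Fin (c - 1)} (h : inducedCol c k ord v ≤ i) (p : Fin k) :
    ord (.inl v) < ord (.inr (i, p)) := by
  have hne : ∀ q, ord (.inl v) ≠ ord (.inr (i, q)) := fun q he => by
    simpa using hord.1 he
  obtain ⟨q, hq⟩ : ∃ q, ord (.inl v) < ord (.inr (i, q)) := by
    by_contra! hall
    exact (hord.forall_copy_lt_iff hk v i).mp (fun q => (hall q).lt_of_ne (hne q).symm)
      |>.not_ge h
  by_contra! hp
  obtain ⟨_, hp'⟩ := hord.2.1 i (.inl v) ⟨p, q, (hp.lt_of_ne (hne p).symm), hq⟩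
  simp at hp'

lemma lt_of_inducedCol_lt (hord : GoodOrd c k ord) (hk : 0 < k) {u v : V}
    (h : inducedCol c k ord u < inducedCol c k ord v) :
    ord (.inl u) < ord (.inl v) := by
  let i : Fin (c - 1) := ⟨inducedCol c k ord u, h.trans_le (inducedCol_le v)⟩
  exact (hord.lt_copy_of_inducedCol_le hk (i := i) le_rfl ⟨0, hk⟩).trans
    ((hord.forall_copy_lt_iff hk v i).mpr h ⟨0, hk⟩)

end GoodOrd

/-- Vertices of color `j` are placed in the slot `2j` and the `i`-th copy of `K` in the slot
`2i + 1` of a lexicographic order, which is then embedded into `ℚ`. -/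
lemma exists_goodOrd_inducedCol_eq {V : Type} [Finite V] {c k : ℕ} (hk : 0 < k)
    (col : V → ℕ) (hcol : ∀ v, col v < c) :
    ∃ ord : V ⊕ Fin (c - 1) × Fin k → ℚ, GoodOrd c k ord ∧
      ∀ v, inducedCol c k ord v = col v := by
  obtain ⟨ι, hι⟩ := Countable.exists_injective_nat V
  have : Countable (ℕ ×ₗ ℕ) := inferInstanceAs (Countable (ℕ × ℕ))
  obtain ⟨e⟩ := Order.embedding_from_countable_to_dense (α := ℕ ×ₗ ℕ) (β := ℚ)
  let key : V ⊕ Fin (c - 1) × Fin k → ℕ ×ₗ ℕ :=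
    Sum.elim (fun v => toLex (2 * col v, ι v)) fun z => toLex (2 * z.1 + 1, z.2)
  have hlt : ∀ x y, (e ∘ key) x < (e ∘ key) y ↔ key x < key y := fun _ _ => e.lt_iff_lt
  refine ⟨e ∘ key, ⟨?_, ?_, ?_⟩, fun v => inducedCol_eq_of_forall_iff ?_ fun i => ?_⟩
  · refine e.injective.comp ?_
    rintro (u | ⟨i, p⟩) (v | ⟨j, q⟩) h <;>
      simp only [key, Sum.elim_inl, Sum.elim_inr, EmbeddingLike.apply_eq_iff_eq,
        Prod.mk.injEq] at h
    · rw [hι h.2]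
    · omega
    · omega
    · obtain rfl : i = j := Fin.ext (by omega)
      rw [Fin.ext h.2]
  · rintro i (v | ⟨j, p'⟩) ⟨p, q, h₁, h₂⟩ <;> rw [hlt] at h₁ h₂ <;>
      simp only [key, Sum.elim_inl, Sum.elim_inr, Prod.Lex.toLex_lt_toLex] at h₁ h₂
    · omega
    · exact ⟨p', by rw [Fin.ext (by omega : (j : ℕ) = i)]⟩
  · intro i j hij p q
    rw [hlt]
    simp only [key, Sum.elim_inr, Prod.Lex.toLex_lt_toLex]
    exact Or.inl (by simpa using hij)
  · have := hcol v
    omega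
  · simp only [hlt, key, Sum.elim_inl, Sum.elim_inr, Prod.Lex.toLex_lt_toLex]
    exact ⟨fun h => by have := h ⟨0, hk⟩; omega, fun h p => Or.inl (by omega)⟩

section Copies

variable {V : Type} {G : SimpleGraph V} {c k fn : ℕ} {F : SimpleGraph (Fin fn)}
  {fcol : Fin fn → ℕ} {ord : V ⊕ Fin (c - 1) × Fin k → ℚ}

lemma exists_orderedCopy_of_coloredCopy (hord : GoodOrd c k ord) (hk : 0 < k)
    (φ : Fin fn ↪ V) (hφ : ∀ a b, F.Adj a b → G.Adj (φ a) (φ b))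
    (hφcol : ∀ a, inducedCol c k ord (φ a) = fcol a) :
    ∃ θ : (Fin fn ⊕ Fin (c - 1) × Fin k) ↪ (V ⊕ Fin (c - 1) × Fin k),
      (∀ a b, (starGraph F c k).Adj a b → (starGraph G c k).Adj (θ a) (θ b)) ∧
      ∀ a b, patternLT c k fcol a b → ord (θ a) < ord (θ b) := by
  refine ⟨φ.sumMap (.refl _), starGraph_adj_sumMap hφ, ?_⟩
  rintro (a | ⟨i, p⟩) (b | ⟨j, q⟩) hab <;>
    simp only [patternLT, ← hφcol] at hab <;>
    simp only [Function.Embedding.coe_sumMap, Function.Embedding.refl_apply, Sum.map_inl,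
      Sum.map_inr]
  · exact hord.lt_of_inducedCol_lt hk hab
  · exact hord.lt_copy_of_inducedCol_le hk hab q
  · exact (hord.forall_copy_lt_iff hk _ i).mpr hab p
  · exact hord.2.2 i j hab p q

variable {θ : (Fin fn ⊕ Fin (c - 1) × Fin k) ↪ (V ⊕ Fin (c - 1) × Fin k)}
  (hadj : ∀ a b, (starGraph F c k).Adj a b → (starGraph G c k).Adj (θ a) (θ b))
  (hpat : ∀ a b, patternLT c k fcol a b → ord (θ a) < ord (θ b))
include hadj

lemma exists_copy_image (hG : G.CliqueFree k) (i : Fin (c - 1)) :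
    ∃ j, ∀ p, ∃ q, θ (.inr (i, p)) = .inr (j, q) :=
  exists_copy_of_starGraph_clique hG _ fun p q hpq => hadj _ _ (by simpa using hpq)

include hpat

lemma exists_inr_eq_of_orderedCopy (hord : GoodOrd c k ord) (hk : 0 < k)
    (hG : G.CliqueFree k) (i : Fin (c - 1)) (q : Fin k) :
    ∃ p, θ (.inr (i, p)) = .inr (i, q) := by
  choose σ τ hστ using exists_copy_image hadj hG
  have hτ : ∀ i, Function.Surjective (τ i) := fun i => Finite.surjective_of_injective
    fun p q h => by
      have h' : θ (.inr (i, p)) = θ (.inr (i, q)) := by rw [hστ, hστ, h]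
      simpa using θ.injective h'
  have hσ : StrictMono σ := fun i i' hii => hord.lt_of_forall_copy_lt hk fun p q => by
    obtain ⟨p, rfl⟩ := hτ i p
    obtain ⟨q, rfl⟩ := hτ i' q
    simpa only [hστ] using hpat (.inr (i, p)) (.inr (i', q)) hii
  obtain ⟨p, hp⟩ := hτ i q
  exact ⟨p, by rw [hστ, hσ.apply_eq, hp]⟩

lemma exists_coloredCopy_of_orderedCopy (hord : GoodOrd c k ord) (hk : 0 < k)
    (hG : G.CliqueFree k) (hfcol : ∀ a, fcol a < c) :
    ∃ φ : Fin fn ↪ V, (∀ a b, F.Adj a b → G.Adj (φ a) (φ b)) ∧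
      ∀ a, inducedCol c k ord (φ a) = fcol a := by
  have hsurj := exists_inr_eq_of_orderedCopy hadj hpat hord hk hG
  have hinl : ∀ a, ∃ u, θ (.inl a) = .inl u := fun a => by
    rcases hθa : θ (.inl a) with u | ⟨j, q⟩
    · exact ⟨u, rfl⟩
    · obtain ⟨p, hp⟩ := hsurj j q
      simpa using θ.injective (hθa.trans hp.symm)
  choose φ hφ using hinl
  have hφinj : Function.Injective φ := fun a b h => by
    have h' : θ (.inl a) = θ (.inl b) := by rw [hφ, hφ, h]
    simpa using θ.injective h'
  refine ⟨⟨φ, hφinj⟩,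
    fun a b hab => by simpa [hφ] using hadj (.inl a) (.inl b) (by simpa using hab),
    fun a => inducedCol_eq_of_forall_iff (by have := hfcol a; omega) fun i => ?_⟩
  simp only [Function.Embedding.coeFn_mk]
  constructor
  · intro h
    by_contra! hi
    obtain ⟨p, hp⟩ := hsurj i ⟨0, hk⟩
    have := hpat (.inl a) (.inr (i, p)) hi
    rw [hφ, hp] at this
    exact lt_asymm this (h _)
  · intro hi q
    obtain ⟨p, hp⟩ := hsurj i q
    simpa only [hφ, hp] using hpat (.inr (i, p)) (.inl a) hi

end Copies

theorem stmt18 {V : Type} [Fintype V] (G : SimpleGraph V)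
    (c k : ℕ) (hc : 1 ≤ c) (hk : 2 ≤ k)
    (hG : ¬ ∃ s : Finset V, G.IsNClique k s) :
    -- every coloring is induced by some good ordering
    (∀ col : V → ℕ, (∀ v, col v < c) →
      ∃ ord : V ⊕ Fin (c - 1) × Fin k → ℚ, GoodOrd c k ord ∧
        ∀ v : V, inducedCol c k ord v = col v) ∧
    -- every good ordering induces a coloring with c colors
    (∀ ord : V ⊕ Fin (c - 1) × Fin k → ℚ, GoodOrd c k ord →
      ∀ v : V, inducedCol c k ord v < c) ∧
    -- equivalent good orderings induce the same coloring
    (∀ ord ord' : V ⊕ Fin (c - 1) × Fin k → ℚ, GoodOrd c k ord → GoodOrd c k ord' →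
      (∀ x y, ord x < ord y ↔ ord' x < ord' y) →
      ∀ v : V, inducedCol c k ord v = inducedCol c k ord' v) ∧
    -- colored copies of F' in (G, coloring) correspond to ordered copies of F₊ in (G*, ord)
    (∀ (fn : ℕ) (F : SimpleGraph (Fin fn)) (fcol : Fin fn → ℕ), (∀ u, fcol u < c) →
      ∀ ord : V ⊕ Fin (c - 1) × Fin k → ℚ, GoodOrd c k ord →
      ((∃ φ : Fin fn ↪ V, (∀ a b, F.Adj a b → G.Adj (φ a) (φ b)) ∧
          ∀ a, inducedCol c k ord (φ a) = fcol a) ↔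
        (∃ θ : (Fin fn ⊕ Fin (c - 1) × Fin k) ↪ (V ⊕ Fin (c - 1) × Fin k),
          (∀ a b, (starGraph F c k).Adj a b → (starGraph G c k).Adj (θ a) (θ b)) ∧
          ∀ a b, patternLT c k fcol a b → ord (θ a) < ord (θ b)))) := by
  have hk₀ : 0 < k := by omega
  have hG' : G.CliqueFree k := fun s hs => hG ⟨s, hs⟩
  refine ⟨fun col hcol => exists_goodOrd_inducedCol_eq hk₀ col hcol,
    fun ord _ v => (inducedCol_le v).trans_lt (by omega),
    fun ord ord' _ _ h v => congrFun (inducedCol_congr h) v,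
    fun fn F fcol hfcol ord hord => ⟨?_, ?_⟩⟩
  · rintro ⟨φ, hφ, hφcol⟩
    exact exists_orderedCopy_of_coloredCopy hord hk₀ φ hφ hφcol
  · rintro ⟨θ, hadj, hpat⟩
    exact exists_coloredCopy_of_orderedCopy hadj hpat hord hk₀ hG' hfcol
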